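/- arXiv:1701.05474 — 5 statements merged into one kernel-verified Lean document; each statement's English description precedes it below -/
import Mathlib

section
/- In the coloring setting, assume X realizes uncountably many full types (i.e., there is an uncountable subset Y ⊆ X such that for any distinct d, d' ∈ Y there is n with tp_n(d) ≠ tp_n(d')), while for each n the image tp_n(X) is countable. Then no finite subset U ⊆ ω admits a U-coloring of X. -/
/-- `splAt tp d d' k`: `k` is the splitting number of `d, d'`, i.e. the least level where
their types disagree. -/
def splAt {X : Type*} {S : ℕ → Type*} (tp : ∀ n, X → S n) (d d' : X) (k : ℕ) : Prop :=
  tp k d ≠ tp k d' ∧ ∀ j < k, tp j d = tp j d'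

/-- A `U`-coloring: for every pair, either the full types agree, or the colors differ,
or the splitting number lies in `U`. -/
def UColoring {X : Type*} {S : ℕ → Type*} (tp : ∀ n, X → S n) (U : Set ℕ) (c : X → ℕ) :
    Prop :=
  ∀ d d', (∀ n, tp n d = tp n d') ∨ c d ≠ c d' ∨ ∃ k ∈ U, splAt tp d d' k

lemma coh_le {X : Type*} {S : ℕ → Type*} (tp : ∀ n, X → S n)
    (hcoh : ∀ n (d d' : X), tp (n + 1) d = tp (n + 1) d' → tp n d = tp n d')
    (d d' : X) : ∀ n m, m ≤ n → tp n d = tp n d' → tp m d = tp m d' := by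
  intro n
  induction n with
  | zero =>
      intro m hm h
      obtain rfl := Nat.le_zero.mp hm
      exact h
  | succ n ih =>
      intro m hm h
      rcases Nat.eq_or_lt_of_le hm with rfl | hlt
      · exact h
      · exact ih m (Nat.lt_succ_iff.mp hlt) (hcoh n d d' h)

/-- if `X` realizes uncountably many full types while each type space
`tp n '' X` is countable, then no finite `U ⊆ ω` admits a `U`-coloring of `X`. -/
theorem stmt4 {X : Type*} {S : ℕ → Type*} (tp : ∀ n, X → S n)
    (hcoh : ∀ n (d d' : X), tp (n + 1) d = tp (n + 1) d' → tp n d = tp n d')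
    (hcnt : ∀ n, (Set.range (tp n)).Countable)
    (Y : Set X) (hY : ¬Y.Countable)
    (hdist : ∀ d ∈ Y, ∀ d' ∈ Y, d ≠ d' → ∃ n, tp n d ≠ tp n d') :
    ∀ U : Set ℕ, U.Finite → ¬∃ c : X → ℕ, UColoring tp U c := by
  intro U hU ⟨c, hc⟩
  obtain ⟨N, hN⟩ : ∃ N, ∀ k ∈ U, k ≤ N := by
    rcases hU.bddAbove with ⟨N, hN⟩
    exact ⟨N, fun k hk => hN hk⟩
  apply hY
  have hcountable : Countable (ℕ × (Set.range (tp N))) := by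
    have := (hcnt N).to_subtype
    infer_instance
  rw [← Set.countable_coe_iff]
  refine Function.Injective.countable
    (f := fun (d : Y) => ((c d.1, ⟨tp N d.1, Set.mem_range_self _⟩) : ℕ × (Set.range (tp N)))) ?_
  intro ⟨d, hd⟩ ⟨d', hd'⟩ heq
  simp only [Prod.mk.injEq, Subtype.mk.injEq] at heq
  by_contra hne
  have hne' : d ≠ d' := by simpa using hne
  rcases hc d d' with hall | hcd | ⟨k, hkU, hk⟩
  · obtain ⟨n, hn⟩ := hdist d hd d' hd' hne'
    exact hn (hall n)
  · exact hcd heq.1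
  · exact hk.1 (coh_le tp hcoh d d' N k (hN k hkU) heq.2)
end

section
/- Suppose (N₁, tp¹) and (N₂, tp²) are two coloring-structures as above, U₁ admits a coloring of N₁, U₂ admits a coloring of N₂, and U₁ ∩ U₂ is finite. If N₂ realizes uncountably many full types and each tp_n has countable image on N₂, then there is no bijection f : N₁ → N₂ preserving all type maps (tp²_n(f(d)) = tp¹_n(d) for all n, d). (Any such bijection would transfer a U₁-coloring to N₂, making both U₁ and U₂ members of the color filter of N₂, contradicting that the filter contains no finite set but is closed under intersections.) -/
lemma splAt_unique {X : Type*} {S : ℕ → Type*} (tp : ∀ n, X → S n) {d d' : X} {k k' : ℕ}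
    (h : splAt tp d d' k) (h' : splAt tp d d' k') : k = k' := by
  by_contra hne
  rcases lt_or_gt_of_ne hne with h1 | h1
  · exact h.1 (h'.2 k h1)
  · exact h'.1 (h.2 k' h1)

lemma mono_subset {N : Type*} (c : N → ℕ) (Y : Set N) (hY : ¬Y.Countable) :
    ∃ n, ¬{d ∈ Y | c d = n}.Countable := by
  by_contra h
  push_neg at h
  apply hY
  have : Y = ⋃ n, {d ∈ Y | c d = n} := by ext d; simp
  rw [this]; exact Set.countable_iUnion h

lemma shrink {N : Type*} {S : ℕ → Type*} (tp : ∀ n, N → S n) (U : Set ℕ) (c : N → ℕ)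
    (hc : UColoring tp U c) (Y : Set N) (hY : ¬Y.Countable)
    (hdist : ∀ d ∈ Y, ∀ d' ∈ Y, d ≠ d' → ∃ n, tp n d ≠ tp n d') :
    ∃ Y' ⊆ Y, ¬Y'.Countable ∧ ∀ d ∈ Y', ∀ d' ∈ Y', d ≠ d' → ∃ k ∈ U, splAt tp d d' k := by
  obtain ⟨n, hn⟩ := mono_subset c Y hY
  refine ⟨{d ∈ Y | c d = n}, fun d hd => hd.1, hn, ?_⟩
  rintro d ⟨hdY, hdc⟩ d' ⟨hd'Y, hd'c⟩ hne
  rcases hc d d' with h | h | h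
  · obtain ⟨m, hm⟩ := hdist d hdY d' hd'Y hne; exact absurd (h m) hm
  · exact absurd (hdc.trans hd'c.symm) h
  · exact h

lemma tp_down {N : Type*} {S : ℕ → Type*} (tp : ∀ n, N → S n)
    (hcoh : ∀ n (d d' : N), tp (n + 1) d = tp (n + 1) d' → tp n d = tp n d')
    (d d' : N) : ∀ m j, j ≤ m → tp m d = tp m d' → tp j d = tp j d' := by
  intro m
  induction m with
  | zero => intro j hj h; rw [Nat.le_zero.mp hj]; exact h
  | succ m ih =>
    intro j hj h
    rcases Nat.lt_or_ge j (m + 1) with h1 | h1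
    · exact ih j (Nat.lt_succ_iff.mp h1) (hcoh m d d' h)
    · have : j = m + 1 := le_antisymm hj h1
      subst this; exact h

/-- if `N₁` is `U₁`-colored and `N₂` is `U₂`-colored with `U₁ ∩ U₂` finite,
and `N₂` realizes uncountably many full types while each of its type spaces is countable,
then there is no type-preserving bijection `N₁ → N₂`. -/
theorem stmt5 {N₁ N₂ : Type*} {S : ℕ → Type*}
    (tp₁ : ∀ n, N₁ → S n) (tp₂ : ∀ n, N₂ → S n)
    (hcoh₁ : ∀ n (d d' : N₁), tp₁ (n + 1) d = tp₁ (n + 1) d' → tp₁ n d = tp₁ n d')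
    (hcoh₂ : ∀ n (d d' : N₂), tp₂ (n + 1) d = tp₂ (n + 1) d' → tp₂ n d = tp₂ n d')
    (U₁ U₂ : Set ℕ) (c₁ : N₁ → ℕ) (c₂ : N₂ → ℕ)
    (hc₁ : UColoring tp₁ U₁ c₁) (hc₂ : UColoring tp₂ U₂ c₂)
    (hfin : (U₁ ∩ U₂).Finite)
    (hcnt : ∀ n, (Set.range (tp₂ n)).Countable)
    (Y : Set N₂) (hY : ¬Y.Countable)
    (hdist : ∀ d ∈ Y, ∀ d' ∈ Y, d ≠ d' → ∃ n, tp₂ n d ≠ tp₂ n d') :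
    ¬∃ f : N₁ ≃ N₂, ∀ n d, tp₂ n (f d) = tp₁ n d := by
  rintro ⟨f, hf⟩
  have h2 : ∀ n (e : N₂), tp₂ n e = tp₁ n (f.symm e) := fun n e => by
    rw [← hf n (f.symm e), f.apply_symm_apply]
  -- transfer the U₁-coloring to N₂
  have hc₁' : UColoring tp₂ U₁ (fun d => c₁ (f.symm d)) := by
    intro d d'
    rcases hc₁ (f.symm d) (f.symm d') with h | h | ⟨k, hk, hs⟩
    · left; intro n; rw [h2 n d, h2 n d', h n]
    · right; left; exact h
    · right; right
      exact ⟨k, hk, by rw [splAt, h2 k d, h2 k d']; exact ⟨hs.1,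
        fun j hj => by rw [h2 j d, h2 j d']; exact hs.2 j hj⟩⟩
  obtain ⟨Y₂, hY₂sub, hY₂unc, hY₂⟩ := shrink tp₂ U₂ c₂ hc₂ Y hY hdist
  have hdist₂ : ∀ d ∈ Y₂, ∀ d' ∈ Y₂, d ≠ d' → ∃ n, tp₂ n d ≠ tp₂ n d' :=
    fun d hd d' hd' hne => hdist d (hY₂sub hd) d' (hY₂sub hd') hne
  obtain ⟨Y₁, hY₁sub, hY₁unc, hY₁⟩ :=
    shrink tp₂ U₁ (fun d => c₁ (f.symm d)) hc₁' Y₂ hY₂unc hdist₂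
  -- pairwise splitting numbers of Y₁ lie in U₁ ∩ U₂
  have hsplit : ∀ d ∈ Y₁, ∀ d' ∈ Y₁, d ≠ d' → ∃ k ∈ U₁ ∩ U₂, splAt tp₂ d d' k := by
    intro d hd d' hd' hne
    obtain ⟨k, hk, hs⟩ := hY₁ d hd d' hd' hne
    obtain ⟨k', hk', hs'⟩ := hY₂ d (hY₁sub hd) d' (hY₁sub hd') hne
    have := splAt_unique tp₂ hs hs'
    exact ⟨k, ⟨hk, this ▸ hk'⟩, hs⟩
  obtain ⟨m, hm⟩ := hfin.bddAbove
  -- tp₂ (m+1) is injective on Y₁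
  have hinj : Set.InjOn (tp₂ (m + 1)) Y₁ := by
    intro d hd d' hd' he
    by_contra hne
    obtain ⟨k, hkU, hs⟩ := hsplit d hd d' hd' hne
    exact hs.1 (tp_down tp₂ hcoh₂ d d' (m + 1) k (Nat.lt_succ_of_le (hm hkU)).le he)
  exact hY₁unc (Set.countable_of_injective_of_countable_image hinj
    ((hcnt (m + 1)).mono (Set.image_subset_range _ _)))
end

section
/- Let G* be a filter on the product-style poset ℙ (conditions are pairs (k, ⟨p_ν : ν ∈ 2^n⟩) of ℚ-conditions all with the same height k, ordered so that heights and tree levels grow, restrictions cohere along the tree, and condition (3): for each ℓ in [k(p), k(q)) the set of ν ∈ 2^{n(p)} below which some μ ∈ 2^{n(q)} has ℓ ∈ U_{q_μ} is empty or a singleton). For η ∈ 2^ω let U_η = ⋃{ U_{q} : q appears as the η↾n-component of some element of G* }. Then for distinct η, η' ∈ 2^ω, U_η ∩ U_{η'} is finite. (Abstract almost-disjointness lemma for the mass-production forcing.) -/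
/-- A condition of the product-style poset `ℙ`: a tree-level `n`, a common height `kk`,
and a `ℚ`-condition for each binary string of length `n`. -/
structure PP (Q : Type*) where
  n : ℕ
  kk : ℕ
  comp : (Fin n → Bool) → Q

/-- Restriction of a binary string of length `m` to length `n ≤ m`. -/
def restrict {n m : ℕ} (h : n ≤ m) (μ : Fin m → Bool) : Fin n → Bool :=
  fun i => μ (Fin.castLE h i)

/-- All components of a `ℙ`-condition have the common height. -/
def PPGood {Q : Type*} (k : Q → ℕ) (p : PP Q) : Prop := ∀ ν, k (p.comp ν) = p.kk

/-- The order on `ℙ`: levels and heights grow, components cohere along the tree, and the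
trace condition: for `ℓ ∈ [k(p), k(q))`, all `μ` with `ℓ ∈ U (q.comp μ)` have the same
restriction to level `n(p)`. -/
def PLE {Q : Type*} [Preorder Q] (U : Q → Set ℕ) (p q : PP Q) : Prop :=
  ∃ hn : p.n ≤ q.n, p.kk ≤ q.kk ∧
    (∀ μ : Fin q.n → Bool, p.comp (restrict hn μ) ≤ q.comp μ) ∧
    ∀ ℓ : ℕ, p.kk ≤ ℓ → ℓ < q.kk → ∀ μ μ' : Fin q.n → Bool,
      ℓ ∈ U (q.comp μ) → ℓ ∈ U (q.comp μ') → restrict hn μ = restrict hn μ'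


lemma mem_up {Q : Type*} [Preorder Q] (k : Q → ℕ) (U : Q → Set ℕ)
    (hmono : ∀ q r : Q, q ≤ r → k q ≤ k r ∧ U q = U r ∩ Set.Iio (k q))
    {p r : PP Q} (h : PLE U p r) (η : ℕ → Bool) {ℓ : ℕ}
    (hℓ : ℓ ∈ U (p.comp fun i => η ↑i)) : ℓ ∈ U (r.comp fun i => η ↑i) := by
  obtain ⟨hn, -, hcomp, -⟩ := h
  have h2 := (hmono _ _ (hcomp (fun i => η ↑i))).2
  have hre : restrict hn (fun i : Fin r.n => η ↑i) = fun i : Fin p.n => η ↑i := rfl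
  rw [hre] at h2
  rw [h2] at hℓ
  exact hℓ.1

/-- almost-disjointness of the generic sets `U_η`.  If `G` is a filter on
`ℙ` containing conditions of arbitrarily large level and height, then for distinct
branches `η ≠ η'` the sets `U_η ∩ U_η'` are finite. -/
theorem stmt6 {Q : Type*} [Preorder Q] (k : Q → ℕ) (U : Q → Set ℕ)
    (hmono : ∀ q r : Q, q ≤ r → k q ≤ k r ∧ U q = U r ∩ Set.Iio (k q))
    (G : Set (PP Q)) (hGood : ∀ p ∈ G, PPGood k p)
    (hdir : ∀ p ∈ G, ∀ q ∈ G, ∃ r ∈ G, PLE U p r ∧ PLE U q r)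
    (hcof : ∀ n m : ℕ, ∃ p ∈ G, n ≤ p.n ∧ m ≤ p.kk) :
    ∀ η η' : ℕ → Bool, η ≠ η' →
      ({ℓ | ∃ p ∈ G, ℓ ∈ U (p.comp fun i => η ↑i)} ∩
        {ℓ | ∃ p ∈ G, ℓ ∈ U (p.comp fun i => η' ↑i)}).Finite := by
  intro η η' hne
  obtain ⟨n₀, hn₀⟩ := Function.ne_iff.mp hne
  obtain ⟨ps, hpsG, hpsn, -⟩ := hcof (n₀+1) 0
  apply Set.Finite.subset (Set.finite_Iio ps.kk)
  rintro ℓ ⟨⟨p, hpG, hp⟩, ⟨p', hp'G, hp'⟩⟩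
  by_contra hℓ
  simp only [Set.mem_Iio, not_lt] at hℓ
  obtain ⟨r1, hr1G, hle1, hle1'⟩ := hdir p hpG p' hp'G
  obtain ⟨r, hrG, hle2, hle3⟩ := hdir r1 hr1G ps hpsG
  have h1 : ℓ ∈ U (r.comp fun i => η ↑i) :=
    mem_up k U hmono hle2 η (mem_up k U hmono hle1 η hp)
  have h2 : ℓ ∈ U (r.comp fun i => η' ↑i) :=
    mem_up k U hmono hle2 η' (mem_up k U hmono hle1' η' hp')
  have hbd : ℓ < r.kk := by
    have := (hmono (r.comp fun i => η ↑i) _ le_rfl).2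
    rw [this] at h1
    have := h1.2
    rwa [hGood r hrG] at this
  obtain ⟨hn, -, -, htr⟩ := hle3
  have heq := htr ℓ hℓ hbd _ _ h1 h2
  have : η n₀ = η' n₀ := congrFun heq ⟨n₀, Nat.lt_of_lt_of_le (Nat.lt_succ_self n₀) hpsn⟩
  exact hn₀ this
end

section
/- With ℙ, ℚ as above and ℚ satisfying the stalling property: if D ⊆ ℚ is dense open, then for every n and every p ∈ ℙ_n there is q ∈ ℙ_n with q ≥ p and q_ν ∈ D for every ν ∈ 2^n. (One improves the components one at a time: extend one chosen component into D, then stall the remaining components up to the new common height; the trace condition (3) is preserved since only one component's U-set grows.) -/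
lemma restrict_refl {n : ℕ} (μ : Fin n → Bool) : restrict (le_refl n) μ = μ := by
  funext i
  exact congrArg μ (Fin.ext rfl)

/-- if `D ⊆ ℚ` is dense open and `ℚ` has the stalling property, then every
`p ∈ ℙ_n` has an extension `q ∈ ℙ_n` all of whose components lie in `D`. -/
theorem stmt8 {Q : Type*} [Preorder Q] (k : Q → ℕ) (U : Q → Set ℕ)
    (hmono : ∀ q r : Q, q ≤ r → k q ≤ k r ∧ U q = U r ∩ Set.Iio (k q))
    (hstall : ∀ r : Q, ∀ m : ℕ, k r ≤ m → ∃ r', r ≤ r' ∧ k r' = m ∧ U r' = U r)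
    (D : Set Q) (hdense : ∀ r : Q, ∃ d ∈ D, r ≤ d)
    (hopen : ∀ d ∈ D, ∀ r, d ≤ r → r ∈ D) :
    ∀ p : PP Q, PPGood k p → ∃ q : PP Q, PPGood k q ∧ PLE U p q ∧ q.n = p.n ∧
      ∀ ν : Fin q.n → Bool, q.comp ν ∈ D := by
  intro p hp
  classical
  have main : ∀ S : Finset (Fin p.n → Bool), ∀ kk (comp : (Fin p.n → Bool) → Q),
      (∀ ν, k (comp ν) = kk) →
      ∃ kk', ∃ comp' : (Fin p.n → Bool) → Q, kk ≤ kk' ∧ (∀ ν, k (comp' ν) = kk') ∧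
        (∀ ν, comp ν ≤ comp' ν) ∧
        (∀ ℓ, kk ≤ ℓ → ℓ < kk' → ∀ μ μ', ℓ ∈ U (comp' μ) → ℓ ∈ U (comp' μ') → μ = μ') ∧
        ∀ ν ∈ S, comp' ν ∈ D := by
    intro S
    induction S using Finset.induction_on with
    | empty =>
      intro kk comp h
      exact ⟨kk, comp, le_rfl, h, fun ν => le_rfl,
        fun ℓ h1 h2 => absurd h2 (not_lt.2 h1), fun ν hν => absurd hν (by simp)⟩
    | @insert ν₀ S hν₀S ih =>
      intro kk comp hk
      obtain ⟨kk₁, comp₁, hle₁, hk₁, hcl₁, htr₁, hD₁⟩ := ih kk comp hk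
      obtain ⟨d, hdD, hd⟩ := hdense (comp₁ ν₀)
      have hkd : kk₁ ≤ k d := by rw [← hk₁ ν₀]; exact (hmono _ _ hd).1
      choose st hst1 hst2 hst3 using fun ν => hstall (comp₁ ν) (k d) (by rw [hk₁]; exact hkd)
      set comp₂ : (Fin p.n → Bool) → Q := fun ν => if ν = ν₀ then d else st ν with hcomp₂
      have hle₂ : ∀ ν, comp₁ ν ≤ comp₂ ν := by
        intro ν
        by_cases h : ν = ν₀
        · subst h; simp only [hcomp₂, if_pos rfl]; exact hd
        · simp only [hcomp₂, if_neg h]; exact hst1 ν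
      have hsub : ∀ ν, U (comp₁ ν) ⊆ Set.Iio kk₁ := by
        intro ν x hx
        have := (hmono (comp₁ ν) (comp₁ ν) le_rfl).2
        rw [this, hk₁] at hx
        exact hx.2
      refine ⟨k d, comp₂, hle₁.trans hkd, ?_, ?_, ?_, ?_⟩
      · intro ν
        by_cases h : ν = ν₀
        · subst h; simp only [hcomp₂, if_pos rfl]
        · simp only [hcomp₂, if_neg h]; exact hst2 ν
      · exact fun ν => (hcl₁ ν).trans (hle₂ ν)
      · intro ℓ h1 h2 μ μ' hμ hμ'
        by_cases hℓ : ℓ < kk₁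
        · -- pull back to comp₁ level and use IH trace
          have hμ1 : ℓ ∈ U (comp₁ μ) := by
            rw [(hmono (comp₁ μ) (comp₂ μ) (hle₂ μ)).2, hk₁]
            exact ⟨hμ, hℓ⟩
          have hμ'1 : ℓ ∈ U (comp₁ μ') := by
            rw [(hmono (comp₁ μ') (comp₂ μ') (hle₂ μ')).2, hk₁]
            exact ⟨hμ', hℓ⟩
          exact htr₁ ℓ h1 hℓ μ μ' hμ1 hμ'1
        · -- ℓ ≥ kk₁: only ν₀'s component can contain ℓ
          have only : ∀ ν, ℓ ∈ U (comp₂ ν) → ν = ν₀ := by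
            intro ν hν
            by_contra h
            have : U (comp₂ ν) = U (comp₁ ν) := by
              simp only [hcomp₂, if_neg h]; exact hst3 ν
            rw [this] at hν
            exact hℓ (hsub ν hν)
          rw [only μ hμ, only μ' hμ']
      · intro ν hν
        rcases Finset.mem_insert.1 hν with h | h
        · subst h; simp only [hcomp₂, if_pos rfl]; exact hdD
        · exact hopen _ (hD₁ ν h) _ (hle₂ ν)
  obtain ⟨kk', comp', hle, hk', hcl, htr, hD⟩ := main Finset.univ p.kk p.comp hp
  refine ⟨⟨p.n, kk', comp'⟩, hk', ⟨le_refl p.n, hle, ?_, ?_⟩, rfl, fun ν => hD ν (Finset.mem_univ ν)⟩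
  · intro μ
    rw [restrict_refl]
    exact hcl μ
  · intro ℓ h1 h2 μ μ' hμ hμ'
    rw [htr ℓ h1 h2 μ μ' hμ hμ']
end

section
/- Let rk : P → ω₁ ∪ {∞} be the splitting rank on a countable poset P of conditions with a countable family Φ of 'splitting formulas', where rk(p) ≥ α+1 requires some extension of p at each level to α-split via some φ ∈ Φ. If rk(p) ≥ ω₁ then there is a single φ ∈ Φ and extensions q₁ ⊇ p ∪ {φ}, q₂ ⊇ p ∪ {¬φ} with rk(q₁), rk(q₂) ≥ ω₁. (If not, for each φ one side is rank-bounded below some β_φ < ω₁; taking β** = sup over countably many φ gives that p does not β**-split, contradicting rk(p) ≥ β** + 1. Uses that a countable supremum of countable ordinals is countable.) -/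
/-!
The minimum of the ranks of the two sides of a splitting pair is an ordinal-valued function on a
countable set. If it never reached `ω₁`, its supremum would be a countable ordinal `β`, while
`rk p ≥ β + 2` yields a splitting pair with both ranks at least `β + 1`.
-/

open Ordinal

theorem Ordinal.exists_forall_lt_omega_one_le_of_countable {ι : Type*} [Countable ι]
    {g : ι → Ordinal} (h : ∀ β < ω₁, ∃ i, β ≤ g i) : ∃ i, ∀ β < ω₁, β ≤ g i := by
  by_contra! hg
  have hg_lt : ∀ i, g i < ω₁ := fun i ↦
    let ⟨_, hβ, hgβ⟩ := hg i
    hgβ.trans hβ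
  obtain ⟨i, hi⟩ := h (Order.succ (⨆ i, g i))
    ((Cardinal.isSuccLimit_omega 1).succ_lt (iSup_lt_omega_one hg_lt))
  exact (Order.lt_succ_iff.2 (le_ciSup bddAbove_of_small i)).not_ge hi

theorem stmt14_general {P Φ : Type*} [Countable P]
    (rk : P → Ordinal) (Extp Extm : P → Φ → Set P) (p : P)
    (hrk : ∀ β : Ordinal, β < (Cardinal.aleph 1).ord → β ≤ rk p)
    (hsplit : ∀ β : Ordinal, β + 1 ≤ rk p →
      ∃ φ : Φ, ∃ q₁ ∈ Extp p φ, ∃ q₂ ∈ Extm p φ, β ≤ rk q₁ ∧ β ≤ rk q₂) :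
    ∃ φ : Φ, ∃ q₁ ∈ Extp p φ, ∃ q₂ ∈ Extm p φ,
      ∀ β : Ordinal, β < (Cardinal.aleph 1).ord → β ≤ rk q₁ ∧ β ≤ rk q₂ := by
  simp only [Cardinal.ord_aleph] at hrk ⊢
  let SplittingPair := {q : P × P // ∃ φ, q.1 ∈ Extp p φ ∧ q.2 ∈ Extm p φ}
  have hcofinal : ∀ β < ω₁, ∃ q : SplittingPair, β ≤ min (rk q.1.1) (rk q.1.2) := by
    intro β hβ
    obtain ⟨φ, q₁, h₁, q₂, h₂, hβ₁, hβ₂⟩ :=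
      hsplit β (hrk _ ((Cardinal.isSuccLimit_omega 1).succ_lt hβ))
    exact ⟨⟨(q₁, q₂), φ, h₁, h₂⟩, le_min hβ₁ hβ₂⟩
  obtain ⟨⟨⟨q₁, q₂⟩, φ, h₁, h₂⟩, hq⟩ := exists_forall_lt_omega_one_le_of_countable hcofinal
  exact ⟨φ, q₁, h₁, q₂, h₂, fun β hβ ↦ le_min_iff.1 (hq β hβ)⟩

/-- if `rk p ≥ β` for every `β < ω₁`, and every successor bound on `rk p`
is witnessed by a splitting via some formula from a countable family, then a single
formula `φ` admits positive and negative extensions both of rank `≥ ω₁`. -/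
theorem stmt14 {P Φ : Type*} [Countable P] [Countable Φ]
    (rk : P → Ordinal) (Extp Extm : P → Φ → Set P) (p : P)
    (hrk : ∀ β : Ordinal, β < (Cardinal.aleph 1).ord → β ≤ rk p)
    (hsplit : ∀ β : Ordinal, β + 1 ≤ rk p →
      ∃ φ : Φ, ∃ q₁ ∈ Extp p φ, ∃ q₂ ∈ Extm p φ, β ≤ rk q₁ ∧ β ≤ rk q₂) :
    ∃ φ : Φ, ∃ q₁ ∈ Extp p φ, ∃ q₂ ∈ Extm p φ,
      ∀ β : Ordinal, β < (Cardinal.aleph 1).ord → β ≤ rk q₁ ∧ β ≤ rk q₂ :=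
  stmt14_general rk Extp Extm p hrk hsplit
end
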